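/- arXiv:1805.03588 — 3 statements merged into one kernel-verified Lean document; each statement's English description precedes it below -/
import Mathlib

section
/- Let K ⊂ ℝ^m be compact with nonempty interior, let μ be a finite Borel measure on ℝ^m with support equal to K, and let f : ℝ^m → ℝ be a polynomial. For each r ∈ ℕ define f_K^{(r)} := sup over all SOS densities h of degree 2r (with respect to μ) of ∫_K f(z) h(z) dμ(z). Then lim_{r→∞} f_K^{(r)} = max_{z∈K} f(z); i.e., in the limit the worst-case expectation over SOS polynomial densities recovers the usual robust counterpart value. -/
open MeasureTheory MvPolynomial

noncomputable section

/-- A polynomial is a sum of squares of polynomials each of total degree at most `r`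
(hence itself of degree at most `2r`). -/
def IsSOS {m : ℕ} (r : ℕ) (h : MvPolynomial (Fin m) ℝ) : Prop :=
  ∃ (N : ℕ) (q : Fin N → MvPolynomial (Fin m) ℝ),
    h = ∑ j, q j ^ 2 ∧ ∀ j, (q j).totalDegree ≤ r

/-- The (closed) support of the measure `μ` is exactly `K`. -/
def HasSupport {m : ℕ} (μ : Measure (Fin m → ℝ)) (K : Set (Fin m → ℝ)) : Prop :=
  μ Kᶜ = 0 ∧ ∀ U : Set (Fin m → ℝ), IsOpen U → (U ∩ K).Nonempty → 0 < μ U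

/-!
Every SOS density is a probability density on `K`, so each `f_K^{(r)}` is at most `max_K f`.
Conversely, shift `f` to `p = f + k ≥ 1` on `K` and take the normalised square
`p ^ (2r) / ∫_K p ^ (2r) dμ`: its expectation of `f` is `I (2r + 1) / I (2r) - k`, where
`I n = ∫_K p ^ n dμ`. Because `μ` charges every neighbourhood of a maximiser of `p`, the mass of
`p ^ n` concentrates where `p` is almost maximal, so the moment ratio `I (n + 1) / I n` eventually
exceeds any value below `max_K p`.
-/

open Filter Topology

section Moments

variable {α : Type*} [MeasurableSpace α] {ν : Measure α} [IsFiniteMeasure ν] {g : α → ℝ}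
  {s : Set α} {b t : ℝ} {n : ℕ}

theorem setIntegral_pow_le_pow_mul_measureReal (hs : MeasurableSet s) (hg0 : ∀ᵐ x ∂ν, 0 ≤ g x)
    (hint : IntegrableOn (fun x => g x ^ n) s ν) (hgs : ∀ x ∈ s, g x ≤ t) :
    ∫ x in s, g x ^ n ∂ν ≤ t ^ n * ν.real s := by
  calc ∫ x in s, g x ^ n ∂ν ≤ ∫ x in s, t ^ n ∂ν := by
        refine setIntegral_mono_ae_restrict hint integrableOn_const ?_
        filter_upwards [ae_restrict_mem hs, ae_restrict_of_ae hg0] with x hx hx0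
        exact pow_le_pow_left₀ hx0 (hgs x hx) n
    _ = t ^ n * ν.real s := by rw [setIntegral_const, smul_eq_mul, mul_comm]

theorem pow_mul_measureReal_le_setIntegral_pow (hs : MeasurableSet s)
    (hint : IntegrableOn (fun x => g x ^ n) s ν) (hb : 0 ≤ b) (hgs : ∀ x ∈ s, b ≤ g x) :
    b ^ n * ν.real s ≤ ∫ x in s, g x ^ n ∂ν := by
  calc b ^ n * ν.real s = ∫ x in s, b ^ n ∂ν := by rw [setIntegral_const, smul_eq_mul, mul_comm]
    _ ≤ ∫ x in s, g x ^ n ∂ν :=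
        setIntegral_mono_on integrableOn_const hint hs fun x hx => pow_le_pow_left₀ hb (hgs x hx) n

theorem eventually_mul_integral_pow_le_integral_pow_succ (hg : Measurable g)
    (hg0 : ∀ᵐ x ∂ν, 0 ≤ g x) (hint : ∀ n : ℕ, Integrable (fun x => g x ^ n) ν)
    {c : ℝ} (hcb : c < b) (hb : 0 < ν {x | b < g x}) :
    ∀ᶠ n in atTop, c * ∫ x, g x ^ n ∂ν ≤ ∫ x, g x ^ (n + 1) ∂ν := by
  have hpow0 (n : ℕ) : 0 ≤ᵐ[ν] fun x => g x ^ n := hg0.mono fun x hx => pow_nonneg hx n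
  rcases le_or_gt c 0 with hc | hc
  · exact Eventually.of_forall fun n =>
      (mul_nonpos_of_nonpos_of_nonneg hc (integral_nonneg_of_ae (hpow0 n))).trans
        (integral_nonneg_of_ae (hpow0 (n + 1)))
  -- Split at a level `t` strictly between `c` and `b`: the mass of `g ^ n` above `b`
  -- eventually dominates the mass below `t`, since their ratio grows like `(b / t) ^ n`.
  obtain ⟨t, hct, htb⟩ := exists_between hcb
  have ht : 0 < t := hc.trans hct
  have hb0 : 0 < b := ht.trans htb
  set T := {x | t ≤ g x}
  have hT : MeasurableSet T := measurableSet_le measurable_const hg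
  have hdecay : Tendsto (fun n : ℕ => c * ν.real Set.univ * (t / b) ^ n) atTop (𝓝 0) := by
    simpa using (tendsto_pow_atTop_nhds_zero_of_lt_one (div_pos ht hb0).le
      ((div_lt_one hb0).2 htb)).const_mul (c * ν.real Set.univ)
  have hpos : 0 < (t - c) * ν.real {x | b < g x} :=
    mul_pos (by linarith) (ENNReal.toReal_pos hb.ne' (measure_ne_top ν _))
  filter_upwards [hdecay.eventually (ge_mem_nhds hpos)] with n hn
  have hhigh : t * ∫ x in T, g x ^ n ∂ν ≤ ∫ x, g x ^ (n + 1) ∂ν := by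
    rw [← integral_const_mul]
    refine (setIntegral_mono_on ((hint n).integrableOn.const_mul t) (hint (n + 1)).integrableOn hT
      fun x (hx : t ≤ g x) => ?_).trans (setIntegral_le_integral (hint (n + 1)) (hpow0 (n + 1)))
    rw [pow_succ']
    exact mul_le_mul_of_nonneg_right hx (pow_nonneg (ht.le.trans hx) n)
  have hlow : ∫ x in Tᶜ, g x ^ n ∂ν ≤ t ^ n * ν.real Set.univ :=
    (setIntegral_pow_le_pow_mul_measureReal hT.compl hg0 (hint n).integrableOn
      fun x (hx : ¬t ≤ g x) => (not_le.1 hx).le).trans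
      (mul_le_mul_of_nonneg_left (measureReal_mono (Set.subset_univ _)) (by positivity))
  have hmid : b ^ n * ν.real {x | b < g x} ≤ ∫ x in T, g x ^ n ∂ν :=
    (pow_mul_measureReal_le_setIntegral_pow (measurableSet_lt measurable_const hg)
      (hint n).integrableOn hb0.le fun x (hx : b < g x) => hx.le).trans
      (setIntegral_mono_set (hint n).integrableOn
        ((ae_restrict_mem hT).mono fun x (hx : t ≤ g x) => pow_nonneg (ht.le.trans hx) n)
        (Eventually.of_forall fun x (hx : b < g x) => (show t ≤ g x by linarith)))
  have hbn : (t / b) ^ n * b ^ n = t ^ n := by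
    rw [← mul_pow, div_mul_cancel₀ _ hb0.ne']
  have hdom : c * ∫ x in Tᶜ, g x ^ n ∂ν ≤ (t - c) * ∫ x in T, g x ^ n ∂ν :=
    calc c * ∫ x in Tᶜ, g x ^ n ∂ν ≤ c * ν.real Set.univ * (t / b) ^ n * b ^ n := by
          rw [mul_assoc _ ((t / b) ^ n), hbn, mul_assoc, mul_comm (ν.real _)]
          exact mul_le_mul_of_nonneg_left hlow hc.le
      _ ≤ (t - c) * ν.real {x | b < g x} * b ^ n :=
          mul_le_mul_of_nonneg_right hn (pow_nonneg hb0.le n)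
      _ ≤ (t - c) * ∫ x in T, g x ^ n ∂ν := by
          rw [mul_assoc, mul_comm (ν.real _)]
          exact mul_le_mul_of_nonneg_left hmid (by linarith)
  rw [← integral_add_compl hT (hint n)]
  linarith

end Moments

variable {m : ℕ}

theorem IsSOS.eval_nonneg {r : ℕ} {h : MvPolynomial (Fin m) ℝ} (hh : IsSOS r h)
    (z : Fin m → ℝ) : 0 ≤ eval z h := by
  obtain ⟨N, q, rfl, -⟩ := hh
  simp only [map_sum, map_pow]
  exact Finset.sum_nonneg fun j _ => sq_nonneg _

theorem IsSOS.mono {r r' : ℕ} (hrr : r ≤ r') {h : MvPolynomial (Fin m) ℝ} (hh : IsSOS r h) :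
    IsSOS r' h := by
  obtain ⟨N, q, hq, hd⟩ := hh
  exact ⟨N, q, hq, fun j => (hd j).trans hrr⟩

theorem isSOS_sq (q : MvPolynomial (Fin m) ℝ) : IsSOS q.totalDegree (q ^ 2) :=
  ⟨1, fun _ => q, by simp, fun _ => le_rfl⟩

theorem HasSupport.restrict_eq_self {μ : Measure (Fin m → ℝ)} {K : Set (Fin m → ℝ)}
    (hsupp : HasSupport μ K) : μ.restrict K = μ :=
  Measure.restrict_eq_self_of_ae_mem (measure_eq_zero_iff_ae_notMem.1 hsupp.1 |>.mono
    fun _ hx => not_not.1 hx)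

theorem HasSupport.measure_pos {μ : Measure (Fin m → ℝ)} {K : Set (Fin m → ℝ)}
    (hsupp : HasSupport μ K) (hK : K.Nonempty) : 0 < μ K := by
  rw [← Measure.restrict_apply_univ, hsupp.restrict_eq_self]
  exact hsupp.2 _ isOpen_univ (by simpa using hK)

/-- `sSup (sosExpectations μ K f r)` is the paper's `f_K^{(r)}`. -/
def sosExpectations (μ : Measure (Fin m → ℝ)) (K : Set (Fin m → ℝ)) (f : MvPolynomial (Fin m) ℝ)
    (r : ℕ) : Set ℝ :=
  {v : ℝ | ∃ h : MvPolynomial (Fin m) ℝ,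
    IsSOS r h ∧ (∫ z in K, eval z h ∂μ) = 1 ∧ v = ∫ z in K, eval z f * eval z h ∂μ}

section sosExpectations

variable {μ : Measure (Fin m → ℝ)} {K : Set (Fin m → ℝ)} {f : MvPolynomial (Fin m) ℝ}

theorem sosExpectations_mono : Monotone (sosExpectations μ K f) := by
  rintro r r' hrr v ⟨h, hh, hnorm, rfl⟩
  exact ⟨h, hh.mono hrr, hnorm, rfl⟩

theorem le_of_mem_sosExpectations [IsFiniteMeasure μ] (hK : IsCompact K) {M : ℝ}
    (hf : ∀ z ∈ K, eval z f ≤ M) {r : ℕ} {v : ℝ} (hv : v ∈ sosExpectations μ K f r) : v ≤ M := by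
  obtain ⟨h, hh, hnorm, rfl⟩ := hv
  have hint (p : MvPolynomial (Fin m) ℝ) : IntegrableOn (fun z => eval z p) K μ :=
    (continuous_eval p).continuousOn.integrableOn_compact hK
  calc ∫ z in K, eval z f * eval z h ∂μ ≤ ∫ z in K, M * eval z h ∂μ :=
        setIntegral_mono_on (by simpa using hint (f * h)) ((hint h).const_mul M)
          hK.measurableSet fun z hz => mul_le_mul_of_nonneg_right (hf z hz) (hh.eval_nonneg z)
    _ = M := by rw [integral_const_mul, hnorm, mul_one]

theorem exists_div_mem_sosExpectations (q : MvPolynomial (Fin m) ℝ)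
    (hq : 0 < ∫ z in K, eval z q ^ 2 ∂μ) :
    ∃ r, (∫ z in K, eval z f * eval z q ^ 2 ∂μ) / (∫ z in K, eval z q ^ 2 ∂μ) ∈
      sosExpectations μ K f r := by
  set I := ∫ z in K, eval z q ^ 2 ∂μ
  set a := (Real.sqrt I)⁻¹
  have heval (z : Fin m → ℝ) : eval z ((C a * q) ^ 2) = I⁻¹ * eval z q ^ 2 := by
    rw [map_pow, map_mul, eval_C, mul_pow, inv_pow, Real.sq_sqrt hq.le]
  refine ⟨_, _, isSOS_sq (C a * q), ?_, ?_⟩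
  · simp only [heval, integral_const_mul]
    exact inv_mul_cancel₀ hq.ne'
  · simp only [heval, mul_left_comm _ I⁻¹, integral_const_mul, div_eq_inv_mul]

theorem exists_le_mem_sosExpectations [IsFiniteMeasure μ] (hK : IsCompact K)
    (hsupp : HasSupport μ K) {z₀ : Fin m → ℝ} (hz₀ : z₀ ∈ K) {c : ℝ} (hc : c < eval z₀ f) :
    ∃ r, ∃ v ∈ sosExpectations μ K f r, c ≤ v := by
  obtain ⟨l, hl⟩ := (hK.image_of_continuousOn (continuous_eval f).continuousOn).bddBelow
  set k := 1 - l
  set p := f + C k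
  have hp (z : Fin m → ℝ) : eval z p = eval z f + k := by simp [p]
  have hp1 (z : Fin m → ℝ) (hz : z ∈ K) : 1 ≤ eval z p := by
    have := hl ⟨z, hz, rfl⟩
    rw [hp]; linarith
  have hint (n : ℕ) : Integrable (fun z => eval z p ^ n) (μ.restrict K) :=
    ((continuous_eval p).pow n).continuousOn.integrableOn_compact hK
  obtain ⟨b, hcb, hbz₀⟩ := exists_between (show c + k < eval z₀ p by rw [hp]; linarith)
  have hb : 0 < μ.restrict K {z | b < eval z p} := by
    rw [hsupp.restrict_eq_self]
    exact hsupp.2 _ (isOpen_lt continuous_const (continuous_eval p)) ⟨z₀, hbz₀, hz₀⟩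
  obtain ⟨N, hN⟩ := eventually_atTop.1 <| eventually_mul_integral_pow_le_integral_pow_succ
    (continuous_eval p).measurable (ae_restrict_of_forall_mem hK.measurableSet
      fun z hz => zero_le_one.trans (hp1 z hz)) hint hcb hb
  set n := N * 2 with hn
  have hmoment := hN n (by omega)
  have hIpos : 0 < ∫ z in K, eval z p ^ n ∂μ :=
    calc 0 < μ.real K := ENNReal.toReal_pos (hsupp.measure_pos ⟨z₀, hz₀⟩).ne' (measure_ne_top μ K)
      _ = ∫ z in K, (1 : ℝ) ∂μ := by simp
      _ ≤ ∫ z in K, eval z p ^ n ∂μ := setIntegral_mono_on integrableOn_const (hint n)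
          hK.measurableSet fun z hz => one_le_pow₀ (hp1 z hz)
  obtain ⟨r, hr⟩ := exists_div_mem_sosExpectations (f := f) (p ^ N)
    (by simpa only [map_pow, ← pow_mul, ← hn] using hIpos)
  simp only [map_pow, ← pow_mul, ← hn] at hr
  refine ⟨r, _, hr, (le_div_iff₀ hIpos).2 ?_⟩
  have hfp (z : Fin m → ℝ) : eval z f * eval z p ^ n = eval z p ^ (n + 1) - k * eval z p ^ n := by
    rw [hp, pow_succ]; ring
  simp only [hfp]
  rw [integral_sub (hint (n + 1)) ((hint n).const_mul k), integral_const_mul]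
  linarith

end sosExpectations

theorem sos_worst_case_tendsto_max_general
    {m : ℕ} (K : Set (Fin m → ℝ)) (hK : IsCompact K)
    (μ : Measure (Fin m → ℝ)) [IsFiniteMeasure μ] (hsupp : HasSupport μ K)
    (f : MvPolynomial (Fin m) ℝ)
    (fK : ℕ → ℝ)
    (hfK : ∀ r, fK r = sSup {v : ℝ | ∃ h : MvPolynomial (Fin m) ℝ,
      IsSOS r h ∧ (∫ z in K, eval z h ∂μ) = 1 ∧
      v = ∫ z in K, eval z f * eval z h ∂μ}) :
    Filter.Tendsto fK Filter.atTop (nhds (sSup ((fun z => eval z f) '' K))) := by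
  change ∀ r, fK r = sSup (sosExpectations μ K f r) at hfK
  rcases K.eq_empty_or_nonempty with rfl | hKne
  · have hfK0 : fK = fun _ => 0 := funext fun r => by simp [hfK, sosExpectations]
    simp [hfK0]
  have himage := hK.image (continuous_eval f)
  obtain ⟨z₀, hz₀, hmax : eval z₀ f = _⟩ := himage.sSup_mem (hKne.image _)
  set M := sSup ((fun z => eval z f) '' K)
  have hbdd (r : ℕ) (v : ℝ) (hv : v ∈ sosExpectations μ K f r) : v ≤ M :=
    le_of_mem_sosExpectations hK (fun z hz => le_csSup himage.bddAbove ⟨z, hz, rfl⟩) hv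
  refine tendsto_order.2 ⟨fun c hc => ?_, fun c hc => ?_⟩
  · obtain ⟨d, v, hv, hcv⟩ :=
      exists_le_mem_sosExpectations (f := f) hK hsupp hz₀ (c := (c + M) / 2) (by linarith)
    filter_upwards [eventually_ge_atTop d] with r hr
    rw [hfK]
    exact (by linarith : c < v).trans_le (le_csSup ⟨M, hbdd r⟩ (sosExpectations_mono hr hv))
  · obtain ⟨d, v, hv, -⟩ :=
      exists_le_mem_sosExpectations (f := f) hK hsupp hz₀ (c := M - 1) (by linarith)
    filter_upwards [eventually_ge_atTop d] with r hr
    rw [hfK]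
    exact (csSup_le ⟨v, sosExpectations_mono hr hv⟩ (hbdd r)).trans_lt hc

/-- as `r → ∞`, the worst-case expectation of a polynomial `f` over SOS
densities of degree `2r` converges to the maximum of `f` on the compact set `K`. -/
theorem sos_worst_case_tendsto_max
    {m : ℕ} (K : Set (Fin m → ℝ)) (hK : IsCompact K) (hKint : (interior K).Nonempty)
    (μ : Measure (Fin m → ℝ)) [IsFiniteMeasure μ] (hsupp : HasSupport μ K)
    (f : MvPolynomial (Fin m) ℝ)
    (fK : ℕ → ℝ)
    (hfK : ∀ r, fK r = sSup {v : ℝ | ∃ h : MvPolynomial (Fin m) ℝ,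
      IsSOS r h ∧ (∫ z in K, eval z h ∂μ) = 1 ∧
      v = ∫ z in K, eval z f * eval z h ∂μ}) :
    Filter.Tendsto fK Filter.atTop (nhds (sSup ((fun z => eval z f) '' K))) :=
  sos_worst_case_tendsto_max_general K hK μ hsupp f fK hfK
end
end

section
/- Let K ⊆ ℝ^k be a nonempty closed set, let μ be a finite Borel measure on K, let f_0, f_1, …, f_p be real-valued Borel-measurable functions on K that are μ-integrable, and let K_0, K_1, …, K_p be Borel-measurable subsets of K. Then there exists an atomic Borel measure μ' on K supported on at most p+2 points, i.e., μ' = Σ_{j=1}^{p+2} w_j δ_{x_j} with weights w_j ≥ 0 and points x_j ∈ K, such that ∫_{K_i} f_i(z) dμ(z) = ∫_{K_i} f_i(z) dμ'(z) for all i = 0, …, p. -/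
/-
Collect the `p + 1` integrals into one integral of the vector-valued function
`g z = (1_{K_i} f_i z)_i` with values in `ℝ^(p+1)`. Since `μ` is carried by `K`, the mean of `g`
lies in the convex hull of `g '' K`: in finite dimension the mean of an integrable function with
values a.e. in a convex set `s` lies in `s` itself, not only in its closure. Indeed, if the mean
`b` were outside `s`, then either a supporting hyperplane at `b` (when `s` has interior) or the
affine span of `s` (when it has none) is a proper affine subspace through `b` containing `f` a.e.,
and induction on the dimension applies there. Carathéodory's theorem writes the mean as a convex
combination of at most `p + 2` points `g x_j` with `x_j ∈ K`, and multiplying the weights by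
`μ univ` gives the atomic measure.
-/

open MeasureTheory
open scoped NNReal ENNReal

noncomputable section

open Set Module

section ConvexIntegral

variable {α E : Type*} [MeasurableSpace α] {μ : Measure α}
  [NormedAddCommGroup E] [NormedSpace ℝ E] [FiniteDimensional ℝ E] {s : Set E} {f : α → E}

theorem Convex.exists_submodule_ne_top_ae_sub_integral_mem [IsProbabilityMeasure μ]
    (hs : Convex ℝ s) (hfs : ∀ᵐ x ∂μ, f x ∈ s) (hfi : Integrable f μ)
    (hb : ∫ x, f x ∂μ ∉ s) :
    ∃ V : Submodule ℝ E, V ≠ ⊤ ∧ ∀ᵐ x ∂μ, f x - ∫ x, f x ∂μ ∈ V := by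
  have := FiniteDimensional.complete ℝ E
  set b := ∫ x, f x ∂μ
  have hb_cl : b ∈ closure s :=
    hs.closure.integral_mem isClosed_closure (hfs.mono fun _ hx => subset_closure hx) hfi
  by_cases hA : affineSpan ℝ s = ⊤
  · obtain ⟨ℓ, hℓ⟩ := geometric_hahn_banach_open_point hs.interior isOpen_interior
      fun h => hb (interior_subset h)
    obtain ⟨y₀, hy₀⟩ := hs.interior_nonempty_iff_affineSpan_eq_top.2 hA
    have hle : ∀ y ∈ s, ℓ y ≤ ℓ b := by
      have : closure (interior s) ⊆ {y | ℓ y ≤ ℓ b} :=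
        closure_minimal (fun y hy => (hℓ y hy).le) (isClosed_le ℓ.continuous continuous_const)
      rw [hs.closure_interior_eq_closure_of_nonempty_interior ⟨y₀, hy₀⟩] at this
      exact fun y hy => this (subset_closure hy)
    have hℓf : (fun x => ℓ (f x)) =ᵐ[μ] fun _ => ℓ b := by
      refine (integral_eq_iff_of_ae_le (ℓ.integrable_comp hfi) (integrable_const _)
        (hfs.mono fun x hx => hle _ hx)).1 ?_
      rw [ℓ.integral_comp_comm hfi, integral_const, probReal_univ, one_smul]
    refine ⟨LinearMap.ker (ℓ : E →ₗ[ℝ] ℝ), fun htop => (hℓ y₀ hy₀).ne ?_, ?_⟩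
    · have hℓ0 : ℓ = 0 := ContinuousLinearMap.coe_injective (LinearMap.ker_eq_top.1 htop)
      simp [hℓ0]
    · filter_upwards [hℓf] with x hx
      simp [hx]
  · have hbA : b ∈ affineSpan ℝ s :=
      closure_minimal (subset_affineSpan ℝ s) (AffineSubspace.closed_of_finiteDimensional _) hb_cl
    refine ⟨(affineSpan ℝ s).direction, fun htop => hA ?_, ?_⟩
    · exact (AffineSubspace.direction_eq_top_iff_of_nonempty ⟨b, hbA⟩).1 htop
    · filter_upwards [hfs] with x hx
      exact AffineSubspace.vsub_mem_direction (subset_affineSpan ℝ s hx) hbA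

theorem Convex.integral_mem_of_finiteDimensional [IsProbabilityMeasure μ]
    (hs : Convex ℝ s) (hfs : ∀ᵐ x ∂μ, f x ∈ s) (hfi : Integrable f μ) :
    ∫ x, f x ∂μ ∈ s := by
  induction hd : finrank ℝ E using Nat.strong_induction_on generalizing E with
  | _ d IH =>
  have := FiniteDimensional.complete ℝ E
  by_contra hb
  obtain ⟨V, hV, hfV⟩ := hs.exists_submodule_ne_top_ae_sub_integral_mem hfs hfi hb
  obtain ⟨P, hP⟩ := Submodule.ClosedComplemented.of_finiteDimensional V
  set b := ∫ x, f x ∂μ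
  have hfb : Integrable (fun x => f x - b) μ := hfi.sub (integrable_const b)
  -- `P (f x - b) = f x - b` a.e., so the induction hypothesis applies in `V`
  have hPs : ∀ᵐ x ∂μ, P (f x - b) ∈ (fun v : V => b + v) ⁻¹' s := by
    filter_upwards [hfs, hfV] with x hx hxV
    simpa [hP ⟨_, hxV⟩] using hx
  have hconv : Convex ℝ ((fun v : V => b + v) ⁻¹' s) :=
    (hs.translate_preimage_right b).linear_preimage V.subtype
  have hmem := IH _ (hd ▸ Submodule.finrank_lt hV) hconv hPs (P.integrable_comp hfb) rfl
  rw [P.integral_comp_comm hfb, integral_sub hfi (integrable_const b), integral_const,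
    probReal_univ, one_smul, sub_self, map_zero] at hmem
  exact hb (by simpa using hmem)

theorem Convex.average_mem_of_finiteDimensional [IsFiniteMeasure μ] [NeZero μ]
    (hs : Convex ℝ s) (hfs : ∀ᵐ x ∂μ, f x ∈ s) (hfi : Integrable f μ) :
    ⨍ x, f x ∂μ ∈ s :=
  hs.integral_mem_of_finiteDimensional (Measure.smul_absolutelyContinuous.ae_le hfs) hfi.to_average

end ConvexIntegral

theorem exists_fin_convex_combination_of_mem_convexHull {𝕜 E : Type*} [Field 𝕜] [LinearOrder 𝕜]
    [IsStrictOrderedRing 𝕜] [AddCommGroup E] [Module 𝕜 E] [FiniteDimensional 𝕜 E] {s : Set E}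
    {b : E} (hb : b ∈ convexHull 𝕜 s) {m : ℕ} (hm : finrank 𝕜 E < m) :
    ∃ (w : Fin m → 𝕜) (z : Fin m → E), (∀ j, 0 ≤ w j) ∧ (∀ j, z j ∈ s) ∧
      ∑ j, w j = 1 ∧ ∑ j, w j • z j = b := by
  obtain ⟨ι, _, z, w, hzs, hz, hw, hw1, hwz⟩ := eq_pos_convex_span_of_mem_convexHull hb
  obtain ⟨y, hy⟩ := convexHull_nonempty_iff.1 ⟨b, hb⟩
  have hcard : Fintype.card ι ≤ Fintype.card (Fin m) := by
    have := (vectorSpan 𝕜 (range z)).finrank_le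
    have := hz.card_le_finrank_succ
    rw [Fintype.card_fin]
    omega
  obtain ⟨e⟩ := Function.Embedding.nonempty_of_card_le hcard
  -- pad the combination with the point `y` carrying weight `0`
  set w' := Function.extend e w 0
  set z' := Function.extend e z fun _ => y
  have hw' : ∀ j ∉ range e, w' j = 0 := fun j hj =>
    Function.extend_apply' _ _ _ fun ⟨i, hi⟩ => hj ⟨i, hi⟩
  refine ⟨w', z', fun j => ?_, fun j => ?_, ?_, ?_⟩
  · by_cases hj : j ∈ range e
    · obtain ⟨i, rfl⟩ := hj
      simpa [w', e.injective.extend_apply] using (hw i).le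
    · simp [hw' j hj]
  · by_cases hj : j ∈ range e
    · obtain ⟨i, rfl⟩ := hj
      simpa [z', e.injective.extend_apply] using hzs (mem_range_self i)
    · simpa [z', Function.extend_apply' _ _ _ fun ⟨i, hi⟩ => hj ⟨i, hi⟩] using hy
  · rw [← hw1]
    exact (Fintype.sum_of_injective e e.injective _ _ hw'
      fun i => (e.injective.extend_apply _ _ _).symm).symm
  · rw [← hwz]
    refine (Fintype.sum_of_injective e e.injective _ _ (fun j hj => by simp [hw' j hj])
      fun i => ?_).symm
    simp [w', z', e.injective.extend_apply]

theorem integral_sum_smul_dirac {X E ι : Type*} [MeasurableSpace X] [MeasurableSingletonClass X]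
    [NormedAddCommGroup E] [NormedSpace ℝ E] [CompleteSpace E] [Fintype ι]
    (w : ι → ℝ≥0) (x : ι → X) (g : X → E) :
    ∫ z, g z ∂(∑ j, (w j : ℝ≥0∞) • Measure.dirac (x j)) = ∑ j, (w j : ℝ) • g (x j) := by
  rw [integral_finsetSum_measure fun j _ =>
    (integrable_dirac enorm_lt_top).smul_measure ENNReal.coe_ne_top]
  simp [integral_dirac, NNReal.smul_def]

theorem exists_fin_sum_smul_eq_integral {X E : Type*} [MeasurableSpace X] {μ : Measure X}
    [IsFiniteMeasure μ] [NormedAddCommGroup E] [NormedSpace ℝ E] [FiniteDimensional ℝ E]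
    {K : Set X} (hK : K.Nonempty) (hμK : ∀ᵐ x ∂μ, x ∈ K) {g : X → E} (hg : Integrable g μ)
    {m : ℕ} (hm : finrank ℝ E < m) :
    ∃ (w : Fin m → ℝ≥0) (x : Fin m → X), (∀ j, x j ∈ K) ∧
      ∫ a, g a ∂μ = ∑ j, (w j : ℝ) • g (x j) := by
  rcases eq_zero_or_neZero μ with rfl | _
  · obtain ⟨x₀, hx₀⟩ := hK
    exact ⟨0, fun _ => x₀, fun _ => hx₀, by simp⟩
  have hmem : ⨍ a, g a ∂μ ∈ convexHull ℝ (g '' K) :=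
    (convex_convexHull ℝ _).average_mem_of_finiteDimensional
      (hμK.mono fun a ha => subset_convexHull ℝ _ (mem_image_of_mem g ha)) hg
  obtain ⟨w, z, hw, hzK, -, hwz⟩ := exists_fin_convex_combination_of_mem_convexHull hmem hm
  choose x hxK hxz using hzK
  refine ⟨fun j => ⟨μ.real univ * w j, mul_nonneg measureReal_nonneg (hw j)⟩, x, hxK, ?_⟩
  rw [← measure_smul_average, ← hwz, Finset.smul_sum]
  simp only [hxz, smul_smul]
  rfl

theorem exists_atomic_measure_matching_integrals_general
    {k : ℕ} (p : ℕ) (K : Set (Fin k → ℝ)) (hKne : K.Nonempty)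
    (μ : Measure (Fin k → ℝ)) [IsFiniteMeasure μ] (hμK : μ Kᶜ = 0)
    (f : Fin (p + 1) → (Fin k → ℝ) → ℝ)
    (hint : ∀ i, Integrable (f i) μ)
    (Ks : Fin (p + 1) → Set (Fin k → ℝ))
    (hKs : ∀ i, MeasurableSet (Ks i) ∧ Ks i ⊆ K) :
    ∃ (w : Fin (p + 2) → ℝ≥0) (x : Fin (p + 2) → Fin k → ℝ),
      (∀ j, x j ∈ K) ∧
      ∀ i, (∫ z in Ks i, f i z ∂μ) =
        ∫ z in Ks i, f i z ∂(∑ j, (w j : ℝ≥0∞) • Measure.dirac (x j)) := by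
  set g : (Fin k → ℝ) → Fin (p + 1) → ℝ := fun z i => (Ks i).indicator (f i) z
  have hgi : ∀ i, Integrable (g · i) μ := fun i => (hint i).indicator (hKs i).1
  obtain ⟨w, x, hxK, hgx⟩ := exists_fin_sum_smul_eq_integral hKne (mem_ae_iff.2 hμK)
    (Integrable.of_eval hgi) (by simp : finrank ℝ (Fin (p + 1) → ℝ) < p + 2)
  refine ⟨w, x, hxK, fun i => ?_⟩
  calc ∫ z in Ks i, f i z ∂μ = (∫ z, g z ∂μ) i := by
        rw [eval_integral hgi, integral_indicator (hKs i).1]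
    _ = ∫ z, g z i ∂(∑ j, (w j : ℝ≥0∞) • Measure.dirac (x j)) := by
        rw [hgx, integral_sum_smul_dirac, Finset.sum_apply]
        rfl
    _ = _ := integral_indicator (hKs i).1

/-- Rogosinski: given `p+1` integrable Borel functions and Borel subsets of a
closed set `K`, there is an atomic measure supported on at most `p+2` points of `K`
matching all the corresponding integrals. -/
theorem exists_atomic_measure_matching_integrals
    {k : ℕ} (p : ℕ) (K : Set (Fin k → ℝ)) (hKcl : IsClosed K) (hKne : K.Nonempty)
    (μ : Measure (Fin k → ℝ)) [IsFiniteMeasure μ] (hμK : μ Kᶜ = 0)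
    (f : Fin (p + 1) → (Fin k → ℝ) → ℝ)
    (hmeas : ∀ i, Measurable (f i)) (hint : ∀ i, Integrable (f i) μ)
    (Ks : Fin (p + 1) → Set (Fin k → ℝ))
    (hKs : ∀ i, MeasurableSet (Ks i) ∧ Ks i ⊆ K) :
    ∃ (w : Fin (p + 2) → ℝ≥0) (x : Fin (p + 2) → Fin k → ℝ),
      (∀ j, x j ∈ K) ∧
      ∀ i, (∫ z in Ks i, f i z ∂μ) =
        ∫ z in Ks i, f i z ∂(∑ j, (w j : ℝ≥0∞) • Measure.dirac (x j)) :=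
  exists_atomic_measure_matching_integrals_general p K hKne μ hμK f hint Ks hKs
end
end

section
/- Let μ be a finite Borel measure on ℝ^n with support K whose moments are finite up to degree 2r + deg(p), and let p be a polynomial. Then the Lasserre bound of order r equals the optimal value over single squared polynomials: \underline{p}_K^{(r)} := inf { ∫_K p h dμ : h SOS of degree at most 2r, ∫_K h dμ = 1 } = inf { ∫_K p(x) q(x)² dμ(x) : q a polynomial of degree at most r with ∫_K q(x)² dμ(x) = 1 }. Equivalently, \underline{p}_K^{(r)} equals the infimum of the Rayleigh quotient (∫_K p q² dμ)/(∫_K q² dμ) over polynomials q of degree at most r with ∫_K q² dμ > 0. -/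
open MeasureTheory MvPolynomial

noncomputable section

lemma integrableOn_eval {n : ℕ} {K : Set (Fin n → ℝ)} {μ : Measure (Fin n → ℝ)}
    (d : ℕ)
    (hmom : ∀ α : Fin n → ℕ, (∑ i, α i) ≤ d → IntegrableOn (fun x => ∏ i, x i ^ α i) K μ)
    (f : MvPolynomial (Fin n) ℝ) (hf : f.totalDegree ≤ d) :
    IntegrableOn (fun x => eval x f) K μ := by
  have heq : (fun x : Fin n → ℝ => eval x f)
      = fun x => ∑ α ∈ f.support, f.coeff α * ∏ i, x i ^ α i := by
    funext x
    rw [eval_eq]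
    refine Finset.sum_congr rfl fun α hα => ?_
    congr 1
    refine Finset.prod_subset (Finset.subset_univ _) fun i _ hi => ?_
    rw [Finsupp.notMem_support_iff.mp hi, pow_zero]
  rw [heq]
  refine integrable_finset_sum _ fun α hα => Integrable.const_mul ?_ _
  refine hmom α ?_
  have h1 : (∑ i, α i) = α.sum fun _ e => e := by
    rw [Finsupp.sum]
    refine (Finset.sum_subset (Finset.subset_univ _) fun i _ hi => ?_).symm
    exact Finsupp.notMem_support_iff.mp hi
  rw [h1]
  exact le_trans (MvPolynomial.le_totalDegree hα) hf

lemma sInf_eq_of_subset {A B : Set ℝ} (hBA : B ⊆ A) (hAB : ∀ a ∈ A, ∃ b ∈ B, b ≤ a) :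
    sInf A = sInf B := by
  by_cases hA : A.Nonempty
  · obtain ⟨a0, ha0⟩ := hA
    obtain ⟨b0, hb0, _⟩ := hAB a0 ha0
    by_cases hbd : BddBelow A
    · refine le_antisymm (csInf_le_csInf hbd ⟨b0, hb0⟩ hBA) ?_
      refine le_csInf ⟨a0, ha0⟩ fun a ha => ?_
      obtain ⟨b, hb, hba⟩ := hAB a ha
      exact le_trans (csInf_le (hbd.mono hBA) hb) hba
    · have hbdB : ¬ BddBelow B := by
        intro ⟨L, hL⟩
        exact hbd ⟨L, fun a ha => by obtain ⟨b, hb, hba⟩ := hAB a ha; exact (hL hb).trans hba⟩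
      rw [Real.sInf_of_not_bddBelow hbd, Real.sInf_of_not_bddBelow hbdB]
  · rw [Set.not_nonempty_iff_eq_empty] at hA
    have hB : B = ∅ := Set.eq_empty_of_subset_empty (hA ▸ hBA)
    rw [hA, hB]

/-- the Lasserre bound of order `r` equals the optimal value over single
squared polynomial densities, and also equals the infimum of the corresponding Rayleigh
quotients. -/
theorem lasserre_bound_eq_single_square
    {n : ℕ} (r : ℕ) (K : Set (Fin n → ℝ)) (hKcl : IsClosed K)
    (μ : Measure (Fin n → ℝ)) [IsFiniteMeasure μ] (hsupp : HasSupport μ K)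
    (p : MvPolynomial (Fin n) ℝ)
    (hmom : ∀ α : Fin n → ℕ, (∑ i, α i) ≤ 2 * r + p.totalDegree →
      IntegrableOn (fun x => ∏ i, x i ^ α i) K μ) :
    sInf {v : ℝ | ∃ h : MvPolynomial (Fin n) ℝ, IsSOS r h ∧
          (∫ x in K, eval x h ∂μ) = 1 ∧ v = ∫ x in K, eval x p * eval x h ∂μ} =
        sInf {v : ℝ | ∃ q : MvPolynomial (Fin n) ℝ, q.totalDegree ≤ r ∧
          (∫ x in K, eval x q ^ 2 ∂μ) = 1 ∧
          v = ∫ x in K, eval x p * eval x q ^ 2 ∂μ} ∧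
      sInf {v : ℝ | ∃ h : MvPolynomial (Fin n) ℝ, IsSOS r h ∧
          (∫ x in K, eval x h ∂μ) = 1 ∧ v = ∫ x in K, eval x p * eval x h ∂μ} =
        sInf {v : ℝ | ∃ q : MvPolynomial (Fin n) ℝ, q.totalDegree ≤ r ∧
          0 < (∫ x in K, eval x q ^ 2 ∂μ) ∧
          v = (∫ x in K, eval x p * eval x q ^ 2 ∂μ) / (∫ x in K, eval x q ^ 2 ∂μ)} := by
  set A := {v : ℝ | ∃ h : MvPolynomial (Fin n) ℝ, IsSOS r h ∧
      (∫ x in K, eval x h ∂μ) = 1 ∧ v = ∫ x in K, eval x p * eval x h ∂μ} with hAdef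
  set B := {v : ℝ | ∃ q : MvPolynomial (Fin n) ℝ, q.totalDegree ≤ r ∧
      (∫ x in K, eval x q ^ 2 ∂μ) = 1 ∧
      v = ∫ x in K, eval x p * eval x q ^ 2 ∂μ} with hBdef
  set Cs := {v : ℝ | ∃ q : MvPolynomial (Fin n) ℝ, q.totalDegree ≤ r ∧
      0 < (∫ x in K, eval x q ^ 2 ∂μ) ∧
      v = (∫ x in K, eval x p * eval x q ^ 2 ∂μ) / (∫ x in K, eval x q ^ 2 ∂μ)} with hCdef
  -- integrability facts
  have hqint : ∀ q : MvPolynomial (Fin n) ℝ, q.totalDegree ≤ r →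
      IntegrableOn (fun x => eval x q ^ 2) K μ ∧
      IntegrableOn (fun x => eval x p * eval x q ^ 2) K μ := by
    intro q hq
    have h2 : (q ^ 2).totalDegree ≤ 2 * r :=
      le_trans (totalDegree_pow _ _) (by omega)
    constructor
    · have := integrableOn_eval _ hmom (q ^ 2) (le_trans h2 (Nat.le_add_right _ _))
      simpa [map_pow] using this
    · have h3 : (p * q ^ 2).totalDegree ≤ 2 * r + p.totalDegree := by
        refine le_trans (totalDegree_mul _ _) ?_
        omega
      have := integrableOn_eval _ hmom (p * q ^ 2) h3
      simpa [map_mul, map_pow] using this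
  -- B = Cs as sets
  have hBC : B = Cs := by
    ext v
    constructor
    · rintro ⟨q, hq, h1, rfl⟩
      refine ⟨q, hq, by rw [h1]; norm_num, by rw [h1, div_one]⟩
    · rintro ⟨q, hq, hpos, rfl⟩
      set I := ∫ x in K, eval x q ^ 2 ∂μ with hI
      set c : ℝ := (Real.sqrt I)⁻¹ with hc
      have hc2 : c ^ 2 = I⁻¹ := by
        rw [hc, ← Real.sqrt_inv, Real.sq_sqrt (by positivity)]
      refine ⟨MvPolynomial.C c * q, ?_, ?_, ?_⟩
      · refine le_trans (totalDegree_mul _ _) ?_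
        simp [totalDegree_C, hq]
      · have : (fun x => eval x (MvPolynomial.C c * q) ^ 2)
            = fun x => c ^ 2 * eval x q ^ 2 := by
          funext x; simp [mul_pow]
        rw [this, integral_const_mul, hc2, ← hI, inv_mul_cancel₀ (ne_of_gt hpos)]
      · have : (fun x => eval x p * eval x (MvPolynomial.C c * q) ^ 2)
            = fun x => c ^ 2 * (eval x p * eval x q ^ 2) := by
          funext x; simp [mul_pow]; ring
        rw [this, integral_const_mul, hc2, div_eq_inv_mul]
  -- B ⊆ A
  have hBA : B ⊆ A := by
    rintro v ⟨q, hq, h1, rfl⟩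
    refine ⟨q ^ 2, ⟨1, fun _ => q, by simp, fun _ => hq⟩, ?_, ?_⟩
    · simpa [map_pow] using h1
    · simp [map_pow]
  -- every element of A is bounded below by an element of Cs
  have hAC : ∀ a ∈ A, ∃ b ∈ Cs, b ≤ a := by
    rintro a ⟨h, ⟨N, q, rfl, hdeg⟩, hint1, rfl⟩
    set t : Fin N → ℝ := fun j => ∫ x in K, eval x (q j) ^ 2 ∂μ with ht
    set s : Fin N → ℝ := fun j => ∫ x in K, eval x p * eval x (q j) ^ 2 ∂μ with hs
    have hqI := fun j => hqint (q j) (hdeg j)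
    have hsum_t : ∑ j, t j = 1 := by
      rw [← hint1]
      have : (fun x => eval x (∑ j, q j ^ 2)) = fun x => ∑ j, eval x (q j) ^ 2 := by
        funext x; simp [map_sum, map_pow]
      rw [this, integral_finset_sum _ (fun j _ => (hqI j).1)]
    have ht_nonneg : ∀ j, 0 ≤ t j := fun j =>
      integral_nonneg (fun x => sq_nonneg _)
    have ha : (∫ x in K, eval x p * eval x (∑ j, q j ^ 2) ∂μ) = ∑ j, s j := by
      have : (fun x => eval x p * eval x (∑ j, q j ^ 2))
          = fun x => ∑ j, eval x p * eval x (q j) ^ 2 := by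
        funext x; simp [map_sum, map_pow, Finset.mul_sum]
      rw [this, integral_finset_sum _ (fun j _ => (hqI j).2)]
    have hzero : ∀ j, t j = 0 → s j = 0 := by
      intro j hj
      have hnn : 0 ≤ᵐ[μ.restrict K] fun x => eval x (q j) ^ 2 :=
        Filter.Eventually.of_forall fun x => sq_nonneg _
      have hae : (fun x => eval x (q j) ^ 2) =ᵐ[μ.restrict K] 0 :=
        ((integral_eq_zero_iff_of_nonneg (fun x => sq_nonneg _) (hqI j).1).mp hj)
      have hae2 : (fun x => eval x p * eval x (q j) ^ 2) =ᵐ[μ.restrict K] 0 := by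
        filter_upwards [hae] with x hx
        simp only [Pi.zero_apply] at hx ⊢
        rw [hx, mul_zero]
      rw [hs]
      simpa using integral_congr_ae hae2
    set a := ∫ x in K, eval x p * eval x (∑ j, q j ^ 2) ∂μ with hadef
    have hex : ∃ j, 0 < t j ∧ s j ≤ t j * a := by
      by_contra hcon
      push_neg at hcon
      have hstep : ∀ j, t j * a ≤ s j := by
        intro j
        rcases eq_or_lt_of_le (ht_nonneg j) with h0 | h0
        · rw [hzero j h0.symm, ← h0, zero_mul]
        · exact le_of_lt (hcon j h0)
      obtain ⟨j0, hj0⟩ : ∃ j, 0 < t j := by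
        by_contra hall
        push_neg at hall
        have : ∀ j, t j = 0 := fun j => le_antisymm (hall j) (ht_nonneg j)
        simp [this] at hsum_t
      have hlt : ∑ j, t j * a < ∑ j, s j := by
        refine Finset.sum_lt_sum (fun j _ => hstep j) ⟨j0, Finset.mem_univ _, hcon j0 hj0⟩
      rw [← Finset.sum_mul, hsum_t, one_mul, ← ha] at hlt
      exact lt_irrefl a hlt
    obtain ⟨j, htj, hsj⟩ := hex
    refine ⟨s j / t j, ⟨q j, hdeg j, htj, rfl⟩, ?_⟩
    rw [div_le_iff₀ htj]
    calc s j ≤ t j * a := hsj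
    _ = a * t j := mul_comm _ _
  have main : sInf A = sInf Cs := sInf_eq_of_subset (hBC ▸ hBA) hAC
  exact ⟨by rw [hBC]; exact main, main⟩
end
end
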